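/- For every matrix A ∈ 𝕋±^{d×n}, the signed tropical convex hull tconv(A) is a tropically convex set; consequently tconv(tconv(A)) = tconv(A). -/

import Mathlib

/-!  Signed tropical numbers 𝕋±, the symmetrized tropical semiring 𝕊,
     and signed tropical convexity (Loho–Végh). -/

inductive SSign : Type where
  | pos : SSign
  | neg : SSign
  | bal : SSign
deriving DecidableEq

/-- The symmetrized tropical semiring 𝕊: the tropical zero 𝟘 = -∞ together with
elements `elem s r` where `s` is a sign (⊕, ⊖ or •) and `r` a real number. -/
inductive STrop : Type where
  | zero : STrop
  | elem : SSign → ℝ → STrop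

namespace STrop

/-- membership in the signed tropical numbers 𝕋± (i.e. not balanced-nonzero). -/
def isSigned : STrop → Prop
  | elem SSign.bal _ => False
  | _ => True

/-- membership in 𝕋≥, the nonnegative tropical numbers. -/
def nneg : STrop → Prop
  | zero => True
  | elem SSign.pos _ => True
  | _ => False

/-- membership in 𝕋≤, the nonpositive tropical numbers. -/
def npos : STrop → Prop
  | zero => True
  | elem SSign.neg _ => True
  | _ => False

/-- strictly positive signed element (sign ⊕, not 𝟘). -/
def isPos : STrop → Prop
  | elem SSign.pos _ => True
  | _ => False

/-- balanced or 𝟘 (membership in 𝕋•). -/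
def balZero : STrop → Prop
  | zero => True
  | elem SSign.bal _ => True
  | _ => False

/-- the negation map ⊖. -/
def neg : STrop → STrop
  | zero => zero
  | elem SSign.pos r => elem SSign.neg r
  | elem SSign.neg r => elem SSign.pos r
  | elem SSign.bal r => elem SSign.bal r

/-- tropical addition ⊕ on 𝕊. -/
noncomputable def add : STrop → STrop → STrop
  | zero, y => y
  | x, zero => x
  | elem s r, elem t u =>
    if r < u then elem t u
    else if u < r then elem s r
    else if s = t then elem s r
    else elem SSign.bal r

def signMul : SSign → SSign → SSign
  | SSign.pos, t => t
  | SSign.neg, SSign.pos => SSign.neg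
  | SSign.neg, SSign.neg => SSign.pos
  | SSign.neg, SSign.bal => SSign.bal
  | SSign.bal, _ => SSign.bal

/-- tropical multiplication ⊙ on 𝕊. -/
def mul : STrop → STrop → STrop
  | zero, _ => zero
  | _, zero => zero
  | elem s r, elem t u => elem (signMul s t) (r + u)

/-- a ⊖ b := a ⊕ (⊖b). -/
noncomputable def sub (x y : STrop) : STrop := add x (neg y)

/-- the tropical one, the signed element ⊕0. -/
def one : STrop := elem SSign.pos 0

/-- the absolute value |·| : 𝕊 → 𝕋≥. -/
def absS : STrop → STrop
  | zero => zero
  | elem _ r => elem SSign.pos r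

/-- strict order: x > y iff x ⊖ y is a strictly positive signed element. -/
def sgt (x y : STrop) : Prop := isPos (sub x y)

/-- balance relation: x ⋈ y iff x ⊖ y is balanced or 𝟘. -/
def bal (x y : STrop) : Prop := balZero (sub x y)

/-- the relation ⊵ : x ⊵ y iff x > y or x ⋈ y. -/
def teq (x y : STrop) : Prop := sgt x y ∨ bal x y

/-- the total order ≤ on the signed tropical numbers 𝕋±
(arbitrarily `False` whenever a balanced element is involved). -/
def sle : STrop → STrop → Prop
  | zero, zero => True
  | zero, elem SSign.pos _ => True
  | elem SSign.neg _, zero => True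
  | elem SSign.neg _, elem SSign.pos _ => True
  | elem SSign.pos r, elem SSign.pos u => r ≤ u
  | elem SSign.neg r, elem SSign.neg u => u ≤ r
  | _, _ => False

/-- U(a): the set of signed numbers incomparable with a; the singleton {a}
for signed a, and the order interval [⊖|a|, |a|] for balanced a. -/
def U : STrop → Set STrop
  | elem SSign.bal r => {x | isSigned x ∧ sle (elem SSign.neg r) x ∧ sle x (elem SSign.pos r)}
  | a => {a}

/-- tropical sum of finitely many elements of 𝕊. -/
noncomputable def sumFin : ∀ {n : ℕ}, (Fin n → STrop) → STrop
  | 0, _ => zero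
  | _ + 1, f => add (f 0) (sumFin fun i => f i.succ)

/-- matrix–vector product A ⊙ x over 𝕊. -/
noncomputable def mv {d n : ℕ} (A : Fin d → Fin n → STrop) (x : Fin n → STrop) : Fin d → STrop :=
  fun i => sumFin fun j => mul (A i j) (x j)

/-- vectors in 𝕋±^d. -/
def isSignedVec {d : ℕ} (v : Fin d → STrop) : Prop := ∀ i, isSigned (v i)

/-- the signed tropical convex hull of the columns of a matrix A:
tconv(A) = {z ∈ 𝕋±^d : z ⋈ A⊙x for some x ∈ 𝕋≥^n with ⊕_j x_j = 0}. -/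
def tconv {d n : ℕ} (A : Fin d → Fin n → STrop) : Set (Fin d → STrop) :=
  {z | isSignedVec z ∧ ∃ x : Fin n → STrop,
    (∀ j, nneg (x j)) ∧ sumFin x = one ∧ ∀ i, bal (z i) (mv A x i)}

/-- the signed tropical convex hull of an arbitrary set: the union of the hulls
of all finite collections of points of M. -/
def tconvSet {d : ℕ} (M : Set (Fin d → STrop)) : Set (Fin d → STrop) :=
  ⋃ (n : ℕ) (A : Fin d → Fin n → STrop) (_ : ∀ j, (fun i => A i j) ∈ M), tconv A

/-- a set M ⊆ 𝕋±^d is tropically convex iff M = tconv(M). -/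
def TropConvex {d : ℕ} (M : Set (Fin d → STrop)) : Prop := M = tconvSet M

/-- evaluation a ⊙ (0, x₁, …, x_d)ᵀ of an affine functional. -/
noncomputable def affEval {d : ℕ} (a : Fin (d + 1) → STrop) (x : Fin d → STrop) : STrop :=
  sumFin fun j => mul (a j) ((Fin.cons one x : Fin (d + 1) → STrop) j)

/-- the open signed tropical halfspace H⁺(a) = {x ∈ 𝕋±^d : a⊙(0,x)ᵀ > 𝟘}. -/
def Hopen {d : ℕ} (a : Fin (d + 1) → STrop) : Set (Fin d → STrop) :=
  {x | isSignedVec x ∧ sgt (affEval a x) zero}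

/-- the closed signed tropical halfspace H̄⁺(a) = {x ∈ 𝕋±^d : a⊙(0,x)ᵀ ⊵ 𝟘}. -/
def Hclosed {d : ℕ} (a : Fin (d + 1) → STrop) : Set (Fin d → STrop) :=
  {x | isSignedVec x ∧ teq (affEval a x) zero}

/-- the non-negative kernel nnker(A). -/
def nnker {d n : ℕ} (A : Fin d → Fin n → STrop) : Set (Fin n → STrop) :=
  {x | (∀ j, nneg (x j)) ∧ x ≠ (fun _ => zero) ∧ ∀ i, balZero (mv A x i)}

/-- the open tropical cone sep(A) = {y ∈ 𝕋±^d : yᵀ⊙A > 𝟘 componentwise}. -/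
def sep {d : ℕ} {J : Type} (A : Fin d → J → STrop) : Set (Fin d → STrop) :=
  {y | isSignedVec y ∧ ∀ j, isPos (sumFin fun i => mul (y i) (A i j))}

end STrop

/-! The balanced elements form an ideal of the commutative semiring 𝕊, so the surpassing
relation `a ⊨ b` (`a = b ⊕ c` with `c` balanced) is compatible with `⊕` and `⊙`. For signed `x`,
`x ⋈ y` gives `y ⊨ x`, and `z ⋈ x` persists when `x` is replaced by anything surpassing it.
Hence if `z ⋈ B ⊙ y` and every column of `B` lies in `tconv A`, say `B_k ⋈ A ⊙ x_k`, then
`(A ⊙ X) ⊙ y ⊨ B ⊙ y` and so `z ⋈ A ⊙ (X ⊙ y)`, where `X ⊙ y` is again a nonnegative vector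
of tropical sum `𝟙`. -/

namespace STrop

open Matrix

protected lemma zero_add (x : STrop) : add zero x = x := by cases x <;> rfl

protected lemma add_zero (x : STrop) : add x zero = x := by cases x <;> rfl

protected lemma add_comm (x y : STrop) : add x y = add y x := by
  rcases x with _ | ⟨s, r⟩ <;> rcases y with _ | ⟨t, u⟩ <;> try rfl
  simp only [add]
  rcases lt_trichotomy r u with h | rfl | h
  · simp [h, not_lt_of_gt h]
  · by_cases hs : s = t <;> simp [hs, eq_comm]
  · simp [h, not_lt_of_gt h]

protected lemma add_assoc (x y z : STrop) : add (add x y) z = add x (add y z) := by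
  rcases x with _ | ⟨s, r⟩
  · simp only [STrop.zero_add]
  rcases y with _ | ⟨t, u⟩
  · simp only [STrop.zero_add, STrop.add_zero]
  rcases z with _ | ⟨p, w⟩
  · simp only [STrop.add_zero]
  simp only [add]
  split_ifs <;> dsimp only <;> split_ifs <;> simp_all <;> linarith

protected lemma neg_add (x y : STrop) : neg (add x y) = add (neg x) (neg y) := by
  rcases x with _ | ⟨s, r⟩ <;> rcases y with _ | ⟨t, u⟩
  · rfl
  · rfl
  · cases s <;> rfl
  · rcases lt_trichotomy r u with h | rfl | h <;> cases s <;> cases t <;>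
      simp [add, neg, *, not_lt_of_gt]

protected lemma zero_mul (x : STrop) : mul zero x = zero := rfl

protected lemma mul_zero (x : STrop) : mul x zero = zero := by cases x <;> rfl

protected lemma one_mul (x : STrop) : mul one x = x := by
  cases x <;> simp [one, mul, signMul]

protected lemma mul_comm (x y : STrop) : mul x y = mul y x := by
  rcases x with _ | ⟨s, r⟩ <;> rcases y with _ | ⟨t, u⟩ <;> try rfl
  cases s <;> cases t <;> simp [mul, signMul, add_comm]

protected lemma mul_one (x : STrop) : mul x one = x := by
  rw [STrop.mul_comm, STrop.one_mul]

protected lemma mul_assoc (x y z : STrop) : mul (mul x y) z = mul x (mul y z) := by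
  rcases x with _ | ⟨s, r⟩ <;> rcases y with _ | ⟨t, u⟩ <;> rcases z with _ | ⟨p, w⟩ <;>
    try rfl
  cases s <;> cases t <;> cases p <;> simp [mul, signMul, add_assoc]

protected lemma right_distrib (x y z : STrop) :
    mul (add x y) z = add (mul x z) (mul y z) := by
  rcases x with _ | ⟨s, r⟩
  · rfl
  rcases y with _ | ⟨t, u⟩
  · simp only [STrop.add_zero, STrop.zero_mul]
  rcases z with _ | ⟨p, w⟩
  · simp only [STrop.mul_zero, STrop.add_zero]
  rcases lt_trichotomy r u with h | rfl | h
  · simp [add, mul, h]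
  · by_cases hst : s = t
    · subst hst; simp [add, mul]
    · cases s <;> cases t <;> cases p <;> simp_all [add, mul, signMul]
  · simp [add, mul, h, not_lt_of_gt h]

instance : Zero STrop := ⟨zero⟩

instance : One STrop := ⟨one⟩

noncomputable instance : Add STrop := ⟨add⟩

instance : Mul STrop := ⟨mul⟩

noncomputable instance : CommSemiring STrop where
  add_assoc := STrop.add_assoc
  zero_add := STrop.zero_add
  add_zero := STrop.add_zero
  add_comm := STrop.add_comm
  mul_assoc := STrop.mul_assoc
  one_mul := STrop.one_mul
  mul_one := STrop.mul_one
  zero_mul := STrop.zero_mul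
  mul_zero := STrop.mul_zero
  left_distrib x y z := by
    show mul x (add y z) = add (mul x y) (mul x z)
    simp only [STrop.mul_comm x]; exact STrop.right_distrib y z x
  right_distrib := STrop.right_distrib
  mul_comm := STrop.mul_comm
  nsmul := nsmulRec

lemma add_def (x y : STrop) : x + y = add x y := rfl

lemma sumFin_eq_sum {n : ℕ} (f : Fin n → STrop) : sumFin f = ∑ i, f i := by
  induction n with
  | zero => rfl
  | succ n ih => rw [Fin.sum_univ_succ, ← ih]; rfl

lemma mv_eq_mulVec {d n : ℕ} (A : Fin d → Fin n → STrop) (x : Fin n → STrop) :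
    mv A x = Matrix.of A *ᵥ x := by
  ext i; exact sumFin_eq_sum _

lemma balZero_mul {x : STrop} (y : STrop) (hx : balZero x) : balZero (mul x y) := by
  rcases x with _ | ⟨_ | _ | _, r⟩ <;> rcases y with _ | ⟨_ | _ | _, u⟩ <;>
    simp_all [balZero, mul, signMul]

lemma balZero_add {x y : STrop} (hx : balZero x) (hy : balZero y) : balZero (add x y) := by
  rcases x with _ | ⟨_ | _ | _, r⟩ <;> rcases y with _ | ⟨_ | _ | _, u⟩ <;>
    simp_all [balZero, add]
  split_ifs <;> trivial

lemma neg_eq_self_of_balZero {x : STrop} (hx : balZero x) : neg x = x := by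
  rcases x with _ | ⟨_ | _ | _, r⟩ <;> simp_all [balZero, neg]

def balancedIdeal : Ideal STrop where
  carrier := {x | balZero x}
  zero_mem' := trivial
  add_mem' := balZero_add
  smul_mem' c x hx := by
    show balZero (mul c x)
    rw [STrop.mul_comm]; exact balZero_mul c hx

lemma mem_balancedIdeal {x : STrop} : x ∈ balancedIdeal ↔ balZero x := Iff.rfl

lemma nneg_add {x y : STrop} (hx : nneg x) (hy : nneg y) : nneg (add x y) := by
  rcases x with _ | ⟨_ | _ | _, r⟩ <;> rcases y with _ | ⟨_ | _ | _, u⟩ <;>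
    simp_all [nneg, add]
  split_ifs <;> trivial

lemma nneg_mul {x y : STrop} (hx : nneg x) (hy : nneg y) : nneg (mul x y) := by
  rcases x with _ | ⟨_ | _ | _, r⟩ <;> rcases y with _ | ⟨_ | _ | _, u⟩ <;>
    simp_all [nneg, mul, signMul]

def nnegSubsemiring : Subsemiring STrop where
  carrier := {x | nneg x}
  zero_mem' := trivial
  one_mem' := trivial
  add_mem' := nneg_add
  mul_mem' := nneg_mul

lemma mem_nnegSubsemiring {x : STrop} : x ∈ nnegSubsemiring ↔ nneg x := Iff.rfl

def Surpasses (a b : STrop) : Prop := ∃ c ∈ balancedIdeal, a = b + c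

lemma Surpasses.mul_right {a b : STrop} (h : Surpasses a b) (m : STrop) :
    Surpasses (a * m) (b * m) := by
  obtain ⟨c, hc, rfl⟩ := h
  exact ⟨c * m, balancedIdeal.mul_mem_right m hc, add_mul b c m⟩

lemma Surpasses.sum {ι : Type*} [Fintype ι] {f g : ι → STrop}
    (h : ∀ i, Surpasses (f i) (g i)) : Surpasses (∑ i, f i) (∑ i, g i) := by
  choose c hc hfg using h
  refine ⟨∑ i, c i, balancedIdeal.sum_mem fun i _ => hc i, ?_⟩
  rw [← Finset.sum_add_distrib]
  exact Finset.sum_congr rfl fun i _ => hfg i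

lemma Surpasses.mulVec {m n : Type*} [Fintype n] {A B : Matrix m n STrop}
    (h : ∀ i j, Surpasses (A i j) (B i j)) (x : n → STrop) (i : m) :
    Surpasses ((A *ᵥ x) i) ((B *ᵥ x) i) :=
  Surpasses.sum fun j => (h i j).mul_right (x j)

lemma bal_of_surpasses {z x y : STrop} (hzx : bal z x) (hyx : Surpasses y x) : bal z y := by
  obtain ⟨c, hc, rfl⟩ := hyx
  rw [mem_balancedIdeal] at hc
  unfold bal sub at hzx ⊢
  rw [add_def, STrop.neg_add, neg_eq_self_of_balZero hc, ← STrop.add_assoc]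
  exact balZero_add hzx hc

lemma surpasses_of_bal {x y : STrop} (hx : isSigned x) (h : bal x y) : Surpasses y x := by
  -- either `y = x`, or `y` is balanced with `|y| ≥ |x|` and then `x ⊕ y = y`
  by_cases hxy : y = x
  · exact ⟨0, balancedIdeal.zero_mem, by rw [hxy, add_zero]⟩
  refine ⟨y, ?_, ?_⟩
  all_goals
    rcases x with _ | ⟨_ | _ | _, r⟩ <;> rcases y with _ | ⟨_ | _ | _, u⟩ <;>
      simp_all [bal, sub, add, neg, balZero, isSigned, mem_balancedIdeal, add_def] <;>
      rcases lt_trichotomy r u with h' | rfl | h' <;> simp_all [not_lt_of_gt]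

lemma bal_refl (x : STrop) : bal x x := by
  rcases x with _ | ⟨_ | _ | _, r⟩ <;> simp [bal, sub, add, neg, balZero]

lemma mem_tconv_iff {d n : ℕ} {A : Fin d → Fin n → STrop} {z : Fin d → STrop} :
    z ∈ tconv A ↔ isSignedVec z ∧ ∃ x : Fin n → STrop,
      (∀ j, x j ∈ nnegSubsemiring) ∧ ∑ j, x j = 1 ∧ ∀ i, bal (z i) ((of A *ᵥ x) i) := by
  simp only [tconv, Set.mem_ofPred_eq, mem_nnegSubsemiring, sumFin_eq_sum, mv_eq_mulVec]
  rfl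

lemma mem_tconv_column {d : ℕ} {z : Fin d → STrop} (hz : isSignedVec z) :
    z ∈ tconv fun i (_ : Fin 1) => z i := by
  refine mem_tconv_iff.2 ⟨hz, fun _ => 1, fun _ => one_mem _, by simp, fun i => ?_⟩
  simpa [mulVec, dotProduct] using bal_refl (z i)

lemma subset_tconvSet {d : ℕ} {M : Set (Fin d → STrop)} (hM : ∀ z ∈ M, isSignedVec z) :
    M ⊆ tconvSet M := by
  intro z hz
  simp only [tconvSet, Set.mem_iUnion]
  exact ⟨1, _, fun _ => hz, mem_tconv_column (hM z hz)⟩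

lemma tconv_subset_of_forall_column_mem {d n m : ℕ} {A : Fin d → Fin n → STrop}
    {B : Fin d → Fin m → STrop} (hB : ∀ k, (fun i => B i k) ∈ tconv A) :
    tconv B ⊆ tconv A := by
  intro z hz
  obtain ⟨hz, y, hy_nneg, hy_sum, hzy⟩ := mem_tconv_iff.1 hz
  choose hB_signed X hX_nneg hX_sum hBX using fun k => mem_tconv_iff.1 (hB k)
  let W : Matrix (Fin n) (Fin m) STrop := (Matrix.of X)ᵀ
  refine mem_tconv_iff.2 ⟨hz, W *ᵥ y, fun j => ?_, ?_, fun i => ?_⟩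
  · exact Subsemiring.sum_mem _ (t := Finset.univ) fun k _ => mul_mem (hX_nneg k j) (hy_nneg k)
  · calc ∑ j, (W *ᵥ y) j = ∑ k, (∑ j, X k j) * y k := by
          simp only [W, mulVec, dotProduct, transpose_apply, of_apply, Finset.sum_mul]
          exact Finset.sum_comm
      _ = 1 := by simp only [hX_sum, one_mul, hy_sum]
  · rw [mulVec_mulVec]
    exact bal_of_surpasses (hzy i)
      (Surpasses.mulVec (fun i k => surpasses_of_bal (hB_signed k i) (hBX k i)) y i)

lemma tconvSet_tconv {d n : ℕ} (A : Fin d → Fin n → STrop) : tconvSet (tconv A) = tconv A :=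
  (Set.iUnion_subset fun _ => Set.iUnion_subset fun _ => Set.iUnion_subset
    tconv_subset_of_forall_column_mem).antisymm (subset_tconvSet fun _ hz => hz.1)

end STrop

theorem tconv_closure_general (d n : ℕ) (A : Fin d → Fin n → STrop) :
    STrop.TropConvex (STrop.tconv A) ∧
      STrop.tconvSet (STrop.tconv A) = STrop.tconv A :=
  ⟨(STrop.tconvSet_tconv A).symm, STrop.tconvSet_tconv A⟩

/-- tconv(A) is tropically convex; consequently
tconv(tconv(A)) = tconv(A). -/
theorem tconv_closure (d n : ℕ) (A : Fin d → Fin n → STrop)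
    (hA : ∀ i j, STrop.isSigned (A i j)) :
    STrop.TropConvex (STrop.tconv A) ∧
      STrop.tconvSet (STrop.tconv A) = STrop.tconv A :=
  tconv_closure_general d n A
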